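/- arXiv:math/0401075 — 5 statements merged into one kernel-verified Lean document; each statement's English description precedes it below -/
import Mathlib

section
/- The projection onto the first coordinate, F̃₂(L_{7,2}) → S³, (x,y) ↦ x, admits a continuous section; its fiber over x ∈ S³ is S³ with the 7-point orbit of x removed. -/
open Complex

/-- `zeta t = exp(2πit/7)`. -/
noncomputable def zeta (t : ℝ) : ℂ := Complex.exp ((2 * Real.pi * t / 7 : ℝ) * Complex.I)

lemma abs_zeta (t : ℝ) : ‖zeta t‖ = 1 := Complex.norm_exp_ofReal_mul_I _

/-- The 3-sphere as the unit sphere in `ℂ × ℂ`. -/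
def Sph3 : Set (ℂ × ℂ) := {p | ‖p.1‖ ^ 2 + ‖p.2‖ ^ 2 = 1}

/-- The `ℤ/7`-action with parameter `n`: `k • (x₁, x₂) = (ζ^k x₁, ζ^{nk} x₂)`. -/
noncomputable def act (n : ℕ) (k : ZMod 7) (p : ↥Sph3) : ↥Sph3 :=
  ⟨(zeta k.val * p.1.1, zeta (n * k.val) * p.1.2), by
    have h := p.2
    simp only [Sph3, Set.mem_setOf_eq, norm_mul, abs_zeta, one_mul] at h ⊢
    exact h⟩

/-- Orbit equivalence for the `ℤ/7`-action with parameter `n`. -/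
def lensRel (n : ℕ) (x y : ↥Sph3) : Prop := ∃ g : ZMod 7, y = act n g x

/-- The lens space `L_{7,n}`, the quotient of `S³` by the `ℤ/7`-action,
with the quotient topology. -/
abbrev Lens (n : ℕ) := Quot (lensRel n)

/-- The configuration space of `k` (ordered) pairwise distinct points of `M`,
topologized as a subspace of `M^k`. -/
abbrev Conf (k : ℕ) (M : Type*) [TopologicalSpace M] := {f : Fin k → M // Function.Injective f}

/-- The orbit configuration space `F̃₂(L_{7,2})`: pairs `(x,y)` of points of `S³`
with `x ≠ g·y` for all `g ∈ ℤ/7` (action with parameter `2`). -/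
abbrev OrbConf2 := {p : ↥Sph3 × ↥Sph3 // ∀ g : ZMod 7, p.1 ≠ act 2 g p.2}

/-! Since `7` is odd, no power of `ζ` equals `-1`; hence `-x` is never in the orbit of `x`,
and `x ↦ (x, -x)` is a continuous section of the projection. The fibre over `x` is cut out of
`{x} × S³` by the defining condition, so the second coordinate identifies it with
`S³ ∖ orbit(x)`. -/

lemma zeta_natCast_pow_seven (m : ℕ) : zeta m ^ 7 = 1 := by
  rw [zeta, ← Complex.exp_nat_mul]
  convert Complex.exp_nat_mul_two_pi_mul_I m using 2
  push_cast
  ring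

lemma zeta_natCast_ne_neg_one (m : ℕ) : zeta m ≠ -1 := by
  intro h
  have h7 := zeta_natCast_pow_seven m
  rw [h] at h7
  norm_num at h7

lemma ne_zeta_natCast_mul_neg {z : ℂ} (hz : z ≠ 0) (m : ℕ) : z ≠ zeta m * -z := by
  intro h
  have : (zeta m + 1) * z = 0 := by linear_combination h
  exact zeta_natCast_ne_neg_one m
    (eq_neg_of_add_eq_zero_left ((mul_eq_zero.mp this).resolve_right hz))

def negSph (x : ↥Sph3) : ↥Sph3 :=
  ⟨-x.1, by
    simpa only [Sph3, Set.mem_ofPred_eq, Prod.fst_neg, Prod.snd_neg, norm_neg] using x.2⟩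

lemma continuous_negSph : Continuous negSph :=
  continuous_subtype_val.neg.subtype_mk _

lemma ne_act_negSph (n : ℕ) (x : ↥Sph3) (g : ZMod 7) : x ≠ act n g (negSph x) := by
  intro h
  have h₁ : x.1.1 = zeta g.val * -x.1.1 := congrArg (fun y => y.1.1) h
  have h₂ : x.1.2 = zeta (n * g.val : ℕ) * -x.1.2 := by
    push_cast
    exact congrArg (fun y => y.1.2) h
  by_cases hx : x.1.1 = 0
  · have hx₂ : x.1.2 ≠ 0 := by
      intro hx₂
      have hsph := x.2
      simp [Sph3, hx, hx₂] at hsph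
    exact ne_zeta_natCast_mul_neg hx₂ _ h₂
  · exact ne_zeta_natCast_mul_neg hx _ h₁

def antipodalSection : C(↥Sph3, OrbConf2) where
  toFun x := ⟨(x, negSph x), ne_act_negSph 2 x⟩
  continuous_toFun := (continuous_id.prodMk continuous_negSph).subtype_mk _

def Homeomorph.fiberFstSubtypeProd {X Y : Type*} [TopologicalSpace X] [TopologicalSpace Y]
    (R : X → Y → Prop) (x : X) :
    {p : {q : X × Y // R q.1 q.2} // p.1.1 = x} ≃ₜ {y : Y // R x y} where
  toFun p := ⟨p.1.1.2, (congrArg (R · p.1.1.2) p.2).mp p.1.2⟩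
  invFun y := ⟨⟨(x, y.1), y.2⟩, rfl⟩
  left_inv p := Subtype.ext <| Subtype.ext <| Prod.ext p.2.symm rfl
  right_inv _ := rfl
  continuous_toFun :=
    (continuous_snd.comp (continuous_subtype_val.comp continuous_subtype_val)).subtype_mk _
  continuous_invFun := ((continuous_const.prodMk continuous_subtype_val).subtype_mk _).subtype_mk _

/-- The projection onto the first coordinate, `F̃₂(L_{7,2}) → S³`, `(x,y) ↦ x`,
admits a continuous section; its fiber over `x ∈ S³` is (homeomorphic, via the second
coordinate, to) `S³` with the 7-point orbit of `x` removed. -/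
theorem stmt_9 :
    (∃ s : C(↥Sph3, OrbConf2), ∀ x : ↥Sph3, (s x).1.1 = x) ∧
    ∀ x : ↥Sph3,
      IsHomeomorph (fun p : {p : OrbConf2 // p.1.1 = x} =>
        (⟨p.1.1.2, by intro g; have h := p.1.2 g; rw [p.2] at h; exact h⟩ :
          {y : ↥Sph3 // ∀ g : ZMod 7, x ≠ act 2 g y})) :=
  ⟨⟨antipodalSection, fun _ => rfl⟩,
    fun x => (Homeomorph.fiberFstSubtypeProd (fun x y => ∀ g, x ≠ act 2 g y) x).isHomeomorph⟩
end

section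
/- For j,k ∈ {0,…,6} with k − j ≡ 2 (mod 7) or k − j ≡ 5 (mod 7), the sets A_j and A_k are disjoint: A_j ∩ A_k = ∅. (Thus, apart from the diagonals shared by consecutive A's, A_k meets only A_{k+3} and A_{k+4}.) -/
open Complex

/-- The "diagonal" 3-sphere `Δ_k = {((x₁,x₂),(ζᵏx₁,ζ^{2k}x₂))} ⊆ S³ × S³`. -/
def Delta (k : ℕ) : Set ((ℂ × ℂ) × (ℂ × ℂ)) :=
  {q | ∃ p ∈ Sph3, q = (p, (zeta k * p.1, zeta (2 * k) * p.2))}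

/-- `A_k = {((x₁,x₂),(ζˢx₁,ζ^{2s}x₂)) : (x₁,x₂) ∈ S³, s ∈ [k−1,k]} ⊆ S³ × S³`. -/
def A (k : ℕ) : Set ((ℂ × ℂ) × (ℂ × ℂ)) :=
  {q | ∃ p ∈ Sph3, ∃ s : ℝ, (k : ℝ) - 1 ≤ s ∧ s ≤ k ∧
    q = (p, (zeta s * p.1, zeta (2 * s) * p.2))}

/-!
If a point lies in `A j ∩ A k`, with parameters `s ∈ [j-1, j]` and `t ∈ [k-1, k]`, then the
base point is nonzero in some coordinate, so `ζ^{2s} = ζ^{2t}` and `2(s - t) ∈ 7ℤ`. But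
`2(s - t)` lies within `2` of `2(j - k)`, which is `≡ 3` or `≡ 4 (mod 7)`; no multiple of `7`
is that close.
-/

lemma exists_int_eq_add_of_zeta_eq {a b : ℝ} (h : zeta a = zeta b) :
    ∃ n : ℤ, a = b + 7 * n := by
  obtain ⟨n, hn⟩ := Complex.exp_eq_exp_iff_exists_int.mp h
  have harg : ((2 * Real.pi * a / 7 : ℝ) : ℂ) = ((2 * Real.pi * (b + 7 * n) / 7 : ℝ) : ℂ) := by
    apply mul_right_cancel₀ I_ne_zero
    push_cast at hn ⊢
    linear_combination hn
  rw [ofReal_inj] at harg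
  exact ⟨n, by nlinarith [Real.pi_pos]⟩

lemma ne_zero_of_mem_Sph3 {p : ℂ × ℂ} (hp : p ∈ Sph3) : p ≠ 0 := by
  rintro rfl
  simp [Sph3] at hp

lemma exists_int_two_mul_eq_of_rotation_eq {p : ℂ × ℂ} (hp : p ≠ 0) {s t : ℝ}
    (h : (zeta s * p.1, zeta (2 * s) * p.2) = (zeta t * p.1, zeta (2 * t) * p.2)) :
    ∃ n : ℤ, 2 * s = 2 * t + 7 * n := by
  obtain ⟨h₁, h₂⟩ := Prod.mk.inj h
  by_cases hp₁ : p.1 = 0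
  · have hp₂ : p.2 ≠ 0 := fun hp₂ ↦ hp (Prod.ext hp₁ hp₂)
    exact exists_int_eq_add_of_zeta_eq (mul_right_cancel₀ hp₂ h₂)
  · obtain ⟨m, hm⟩ := exists_int_eq_add_of_zeta_eq (mul_right_cancel₀ hp₁ h₁)
    exact ⟨2 * m, by push_cast; linarith⟩

lemma seven_mul_notMem_Icc {j k : ℤ} (h : (k : ZMod 7) - j = 2 ∨ (k : ZMod 7) - j = 5)
    (n : ℤ) : 7 * n ∉ Set.Icc (2 * (j - k) - 2) (2 * (j - k) + 2) := by
  have hmod : (k - j) % 7 = 2 ∨ (k - j) % 7 = 5 := by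
    rcases h with h | h
    · exact .inl ((ZMod.intCast_eq_intCast_iff' (k - j) 2 7).mp (by push_cast; exact h))
    · exact .inr ((ZMod.intCast_eq_intCast_iff' (k - j) 5 7).mp (by push_cast; exact h))
  rintro ⟨hlo, hhi⟩
  omega

theorem stmt_10_general (j k : ℕ)
    (h : (k : ZMod 7) - (j : ZMod 7) = 2 ∨ (k : ZMod 7) - (j : ZMod 7) = 5) :
    A j ∩ A k = ∅ := by
  refine Set.eq_empty_iff_forall_notMem.mpr ?_
  rintro _ ⟨⟨p, hp, s, hs₁, hs₂, rfl⟩, ⟨p', -, t, ht₁, ht₂, hq⟩⟩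
  obtain ⟨rfl, hrot⟩ := Prod.mk.inj hq
  obtain ⟨n, hn⟩ := exists_int_two_mul_eq_of_rotation_eq (ne_zero_of_mem_Sph3 hp) hrot
  refine seven_mul_notMem_Icc (j := j) (k := k) (by exact_mod_cast h) n ⟨?_, ?_⟩
  · have : 2 * ((j : ℝ) - k) - 2 ≤ 7 * n := by linarith
    exact_mod_cast this
  · have : 7 * (n : ℝ) ≤ 2 * ((j : ℝ) - k) + 2 := by linarith
    exact_mod_cast this

/-- For `j,k ∈ {0,…,6}` with `k − j ≡ 2 (mod 7)` or `k − j ≡ 5 (mod 7)`, the sets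
`A_j` and `A_k` are disjoint.  (Thus, apart from the diagonals shared by consecutive
`A`'s, `A_k` meets only `A_{k+3}` and `A_{k+4}`.) -/
theorem stmt_10 (j k : ℕ) (hj : j ≤ 6) (hk : k ≤ 6)
    (h : (k : ZMod 7) - (j : ZMod 7) = 2 ∨ (k : ZMod 7) - (j : ZMod 7) = 5) :
    A j ∩ A k = ∅ :=
  stmt_10_general j k h
end

section
/- A₁ ∩ A₄ = {((0,x),(0,ζ^λ x)) : x ∈ ℂ, |x| = 1, λ ∈ [0,1]}; in particular A₁ ∩ A₄ is homeomorphic to S¹ × [0,1]. -/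
open Complex

/-!
Write a point of `A₁ ∩ A₄` with parameters `s ∈ [0,1]` and `t ∈ [3,4]`. Since `0 < t - s < 7`,
`ζˢ ≠ ζᵗ`, which forces `x₁ = 0`; since `0 < 2t - 2s < 14`, `ζ^{2s} = ζ^{2t}` forces `2t = 2s + 7`,
so `λ = 2s ∈ [0,1]`. Conversely `λ` is realised by `s = λ/2` and `t = λ/2 + 7/2`.
The parametrisation `(x, λ) ↦ ((0,x),(0,ζ^λ x))` of `S¹ × [0,1]` is a continuous injection from a
compact space, hence a homeomorphism onto its image.
-/

open Set Function Topology

lemma zeta_eq_circleExp (t : ℝ) : zeta t = Circle.exp (2 * Real.pi * t / 7) := by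
  rw [Circle.coe_exp, zeta]

@[fun_prop]
lemma continuous_zeta : Continuous zeta := by
  unfold zeta
  fun_prop

lemma zeta_periodic : Periodic zeta 7 := by
  intro t
  simp only [zeta_eq_circleExp]
  rw [show 2 * Real.pi * (t + 7) / 7 = 2 * Real.pi * t / 7 + 2 * Real.pi by ring,
    Circle.exp_add, Circle.exp_two_pi, mul_one]

lemma zeta_eq_zeta_iff {s t : ℝ} : zeta s = zeta t ↔ ∃ n : ℤ, s = t + 7 * n := by
  simp only [zeta_eq_circleExp, Circle.coe_inj, Circle.exp_eq_exp]
  refine exists_congr fun n => ?_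
  constructor <;> intro h
  · field_simp at h
    linarith
  · rw [h]; ring

lemma zeta_ne_zeta_of_lt_of_lt {s t : ℝ} (hst : s < t) (hts : t < s + 7) :
    zeta s ≠ zeta t := by
  rintro h
  obtain ⟨n, hn⟩ := zeta_eq_zeta_iff.1 h
  have hneg : (n : ℝ) < 0 := by linarith
  have hgt : (-1 : ℝ) < n := by linarith
  norm_cast at hneg hgt
  omega

lemma eq_of_zeta_eq_of_abs_sub_lt {s t : ℝ} (h : |s - t| < 7) (heq : zeta s = zeta t) :
    s = t := by
  rw [abs_lt] at h
  rcases lt_trichotomy s t with hst | rfl | hts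
  · exact absurd heq (zeta_ne_zeta_of_lt_of_lt hst (by linarith))
  · rfl
  · exact absurd heq.symm (zeta_ne_zeta_of_lt_of_lt hts (by linarith))

lemma eq_add_seven_of_zeta_eq {s t : ℝ} (hst : s < t) (hts : t < s + 14)
    (heq : zeta s = zeta t) : t = s + 7 := by
  obtain ⟨n, hn⟩ := zeta_eq_zeta_iff.1 heq
  have hneg : (n : ℝ) < 0 := by linarith
  have hgt : (-2 : ℝ) < n := by linarith
  have hn1 : n = -1 := by
    norm_cast at hneg hgt
    omega
  rw [hn1] at hn
  push_cast at hn
  linarith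

lemma zero_prod_mem_Sph3_iff {x : ℂ} : ((0 : ℂ), x) ∈ Sph3 ↔ ‖x‖ = 1 := by
  simp [Sph3, pow_eq_one_iff_of_nonneg (norm_nonneg x) two_ne_zero]

noncomputable def cylinderParam (z : Metric.sphere (0 : ℂ) 1 × Icc (0 : ℝ) 1) :
    (ℂ × ℂ) × (ℂ × ℂ) :=
  ((0, z.1), (0, zeta z.2 * z.1))

lemma range_cylinderParam : range cylinderParam = {q | ∃ x : ℂ, ‖x‖ = 1 ∧
    ∃ l ∈ Icc (0 : ℝ) 1, q = (((0 : ℂ), x), ((0 : ℂ), zeta l * x))} := by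
  ext q
  constructor
  · rintro ⟨⟨⟨x, hx⟩, ⟨l, hl⟩⟩, rfl⟩
    exact ⟨x, by simpa using hx, l, hl, rfl⟩
  · rintro ⟨x, hx, l, hl, rfl⟩
    exact ⟨(⟨x, by simpa using hx⟩, ⟨l, hl⟩), rfl⟩

lemma A_one_inter_A_four_subset : A 1 ∩ A 4 ⊆ range cylinderParam := by
  rintro q ⟨⟨⟨x₁, x₂⟩, hx, s, hs₀, hs₁, rfl⟩, ⟨⟨x₁', x₂'⟩, -, t, ht₀, ht₁, heq⟩⟩
  obtain ⟨rfl, rfl, h₁, h₂⟩ : x₁ = x₁' ∧ x₂ = x₂' ∧ zeta s * x₁ = zeta t * x₁' ∧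
      zeta (2 * s) * x₂ = zeta (2 * t) * x₂' := by
    simpa only [Prod.mk.injEq, and_assoc] using heq
  norm_num at hs₀ hs₁ ht₀ ht₁
  obtain rfl : x₁ = 0 := by
    by_contra hne
    exact zeta_ne_zeta_of_lt_of_lt (by linarith) (by linarith) (mul_right_cancel₀ hne h₁)
  have hx₂ : ‖x₂‖ = 1 := zero_prod_mem_Sph3_iff.1 hx
  have ht : 2 * t = 2 * s + 7 := eq_add_seven_of_zeta_eq (by linarith) (by linarith)
    (mul_right_cancel₀ (norm_ne_zero_iff.1 (by simp [hx₂])) h₂)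
  refine ⟨(⟨x₂, by simpa using hx₂⟩, ⟨2 * s, by constructor <;> linarith⟩), ?_⟩
  simp [cylinderParam]

lemma range_cylinderParam_subset : range cylinderParam ⊆ A 1 ∩ A 4 := by
  rintro _ ⟨⟨⟨x, hx⟩, ⟨l, hl₀, hl₁⟩⟩, rfl⟩
  have hx' : ((0 : ℂ), x) ∈ Sph3 := zero_prod_mem_Sph3_iff.2 (by simpa using hx)
  -- the first coordinates vanish, so in `A 4` only `ζ^{2s} = ζ^{l + 7} = ζ^l` matters
  refine ⟨⟨_, hx', l / 2, by norm_num; linarith, by norm_num; linarith, ?_⟩,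
    ⟨_, hx', l / 2 + 7 / 2, by norm_num; linarith, by norm_num; linarith, ?_⟩⟩
  · simp [cylinderParam, mul_div_cancel₀]
  · rw [show 2 * (l / 2 + 7 / 2) = l + 7 by ring, zeta_periodic]
    simp [cylinderParam]

lemma isClosedEmbedding_cylinderParam : IsClosedEmbedding cylinderParam := by
  refine Continuous.isClosedEmbedding (by unfold cylinderParam; fun_prop) ?_
  rintro ⟨⟨x, hx⟩, ⟨l, hl⟩⟩ ⟨⟨x', hx'⟩, ⟨l', hl'⟩⟩ h
  obtain ⟨rfl, hζ⟩ : x = x' ∧ zeta l * x = zeta l' * x' := by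
    simpa [cylinderParam] using h
  have hx₀ : x ≠ 0 := ne_zero_of_mem_sphere (by norm_num) ⟨x, hx⟩
  have hll' : |l - l'| < 7 := by
    rw [abs_lt]; constructor <;> linarith [hl.1, hl.2, hl'.1, hl'.2]
  obtain rfl : l = l' := eq_of_zeta_eq_of_abs_sub_lt hll' (mul_right_cancel₀ hx₀ hζ)
  rfl

/-- `A₁ ∩ A₄ = {((0,x),(0,ζ^λx)) : |x| = 1, λ ∈ [0,1]}`; in particular `A₁ ∩ A₄` is
homeomorphic to `S¹ × [0,1]`. -/
theorem stmt_11 :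
    A 1 ∩ A 4 = {q | ∃ x : ℂ, ‖x‖ = 1 ∧ ∃ l ∈ Set.Icc (0:ℝ) 1,
        q = (((0 : ℂ), x), ((0 : ℂ), zeta l * x))} ∧
    Nonempty (↥(A 1 ∩ A 4) ≃ₜ ↥(Metric.sphere (0:ℂ) 1) × ↥(Set.Icc (0:ℝ) 1)) := by
  have h : A 1 ∩ A 4 = range cylinderParam :=
    A_one_inter_A_four_subset.antisymm range_cylinderParam_subset
  exact ⟨h.trans range_cylinderParam,
    ⟨(Homeomorph.setCongr h).trans isClosedEmbedding_cylinderParam.isEmbedding.toHomeomorph.symm⟩⟩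
end

section
/- For any x ∈ ℂ with |x| = 1 and any λ ∈ [0,1], the six vectors ((1,0),(ζ^{λ/2},0)), ((i,0),(iζ^{λ/2},0)), ((0,ix),(0,iζ^{λ}x)), ((1,0),(−ζ^{λ/2},0)), ((i,0),(−iζ^{λ/2},0)), ((0,0),(0,iζ^{λ}x)) in ℂ² × ℂ² span a real vector subspace of dimension 6. (These are the tangent vectors to A₁ and A₄ at the point ((0,x),(0,ζ^λ x)), so A₁ and A₄ intersect transversally.) -/
/-!
Writing `g₀, …, g₅` for the real coefficients of a vanishing combination, the four complex
coordinates give `(g₀ + g₃) + (g₁ + g₄) i = 0`, `g₂ · ix = 0`, `((g₀ - g₃) + (g₁ - g₄) i) ζ^{λ/2} = 0`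
and `(g₂ + g₅) · iζ^λ x = 0`. Since `1, i` are real-independent and `ζ^{λ/2}`, `ix`, `iζ^λ x` are
nonzero, all coefficients vanish: the six vectors are linearly independent.
-/

open Complex

theorem ofReal_add_ofReal_mul_I_mul_eq_zero_iff {a b : ℝ} {z : ℂ} (hz : z ≠ 0) :
    (a + b * I) * z = 0 ↔ a = 0 ∧ b = 0 := by
  simp [hz, Complex.ext_iff]

theorem zeta_ne_zero (t : ℝ) : zeta t ≠ 0 := Complex.exp_ne_zero _

/-- The six vectors of the statement, with `z = ζ^{λ/2}`, `u = ix`, `w = iζ^λ x`. -/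
def tangentVectors (z u w : ℂ) : Fin 6 → (ℂ × ℂ) × (ℂ × ℂ) :=
  ![((1, 0), (z, 0)), ((I, 0), (I * z, 0)), ((0, u), (0, w)),
    ((1, 0), (-z, 0)), ((I, 0), (-(I * z), 0)), ((0, 0), (0, w))]

theorem range_tangentVectors (z u w : ℂ) :
    Set.range (tangentVectors z u w) = {((1, 0), (z, 0)), ((I, 0), (I * z, 0)), ((0, u), (0, w)),
      ((1, 0), (-z, 0)), ((I, 0), (-(I * z), 0)), ((0, 0), (0, w))} := by
  simp only [tangentVectors, Matrix.range_cons, Matrix.range_empty, Set.union_empty,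
    Set.singleton_union]

theorem linearIndependent_tangentVectors {z u w : ℂ} (hz : z ≠ 0) (hu : u ≠ 0) (hw : w ≠ 0) :
    LinearIndependent ℝ (tangentVectors z u w) := by
  rw [Fintype.linearIndependent_iff]
  intro g hg
  simp only [tangentVectors, Fin.sum_univ_six, Matrix.cons_val, Prod.smul_mk, Prod.mk_add_mk,
    Prod.mk_eq_zero, Complex.real_smul, smul_zero, add_zero, zero_add, mul_one] at hg
  obtain ⟨⟨h₁, h₂⟩, h₃, h₄⟩ := hg
  obtain ⟨hs₀, hs₁⟩ := (ofReal_add_ofReal_mul_I_mul_eq_zero_iff one_ne_zero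
    (a := g 0 + g 3) (b := g 1 + g 4)).1 (by push_cast; linear_combination h₁)
  obtain ⟨hd₀, hd₁⟩ := (ofReal_add_ofReal_mul_I_mul_eq_zero_iff hz
    (a := g 0 - g 3) (b := g 1 - g 4)).1 (by push_cast; linear_combination h₃)
  have hg₂ : g 2 = 0 := by simpa [hu] using h₂
  have hg₅ : g 5 = 0 := by simpa [hg₂, hw] using h₄
  intro i
  fin_cases i <;> dsimp only [Fin.reduceFinMk] <;> linarith

theorem stmt_12_general (x : ℂ) (hx : ‖x‖ = 1) (l : ℝ) :
    Module.finrank ℝ (Submodule.span ℝ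
      ({(((1 : ℂ), (0 : ℂ)), (zeta (l / 2), (0 : ℂ))),
        ((Complex.I, (0 : ℂ)), (Complex.I * zeta (l / 2), (0 : ℂ))),
        (((0 : ℂ), Complex.I * x), ((0 : ℂ), Complex.I * zeta l * x)),
        (((1 : ℂ), (0 : ℂ)), (-zeta (l / 2), (0 : ℂ))),
        ((Complex.I, (0 : ℂ)), (-(Complex.I * zeta (l / 2)), (0 : ℂ))),
        (((0 : ℂ), (0 : ℂ)), ((0 : ℂ), Complex.I * zeta l * x))} :
        Set ((ℂ × ℂ) × (ℂ × ℂ)))) = 6 := by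
  have hx₀ : x ≠ 0 := norm_ne_zero_iff.1 (by rw [hx]; exact one_ne_zero)
  have hli := linearIndependent_tangentVectors (zeta_ne_zero (l / 2))
    (mul_ne_zero I_ne_zero hx₀) (mul_ne_zero (mul_ne_zero I_ne_zero (zeta_ne_zero l)) hx₀)
  rw [← range_tangentVectors, finrank_span_eq_card hli, Fintype.card_fin]

/-- For any `x ∈ ℂ` with `|x| = 1` and any `λ ∈ [0,1]`, the six vectors
`((1,0),(ζ^{λ/2},0))`, `((i,0),(iζ^{λ/2},0))`, `((0,ix),(0,iζ^λx))`,
`((1,0),(−ζ^{λ/2},0))`, `((i,0),(−iζ^{λ/2},0))`, `((0,0),(0,iζ^λx))` in `ℂ² × ℂ²`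
span a real vector subspace of dimension 6.  (These are the tangent vectors to `A₁`
and `A₄` at the point `((0,x),(0,ζ^λx))`, so `A₁` and `A₄` intersect transversally.) -/
theorem stmt_12 (x : ℂ) (hx : ‖x‖ = 1) (l : ℝ) (hl : l ∈ Set.Icc (0:ℝ) 1) :
    Module.finrank ℝ (Submodule.span ℝ
      ({(((1 : ℂ), (0 : ℂ)), (zeta (l / 2), (0 : ℂ))),
        ((Complex.I, (0 : ℂ)), (Complex.I * zeta (l / 2), (0 : ℂ))),
        (((0 : ℂ), Complex.I * x), ((0 : ℂ), Complex.I * zeta l * x)),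
        (((1 : ℂ), (0 : ℂ)), (-zeta (l / 2), (0 : ℂ))),
        ((Complex.I, (0 : ℂ)), (-(Complex.I * zeta (l / 2)), (0 : ℂ))),
        (((0 : ℂ), (0 : ℂ)), ((0 : ℂ), Complex.I * zeta l * x))} :
        Set ((ℂ × ℂ) × (ℂ × ℂ)))) = 6 :=
  stmt_12_general x hx l
end

section
/- For n ∈ {1,2} and every k ≥ 2, the forgetful map F̃_k(L_{7,n}) → F̃₂(L_{7,n}), (x₁,…,x_k) ↦ (x₁,x₂), admits a continuous section. -/
open Complex

/-- The orbit configuration space: tuples of points of `S³` lying in pairwise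
distinct `ℤ/7`-orbits (for the action with parameter `n`). -/
abbrev OrbConf (n k : ℕ) :=
  {f : Fin k → ↥Sph3 // ∀ i j, i ≠ j → ∀ g : ZMod 7, f i ≠ act n g (f j)}

/-! The points `x₃, …, x_k` are obtained by rotating `x₂` along the Hopf circle
`θ ↦ e^{iθ} x₂` by small distinct angles. Scalar multiplication by `e^{iθ}` commutes
with the `ℤ/7`-action, and `e^{iθ} x` lies in the orbit of `x` only when `e^{iθ}` is a
seventh root of unity; so angles whose pairwise differences are in `(0, 2π/7)` keep the
new points in distinct orbits, and angles smaller than the distance from `x₂` to the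
orbit of `x₁` (and back) keep them off the orbit of `x₁`. Both bounds depend continuously
on `(x₁, x₂)`. -/

noncomputable def rot (θ : ℝ) (p : ↥Sph3) : ↥Sph3 :=
  ⟨exp (I * θ) • p.1, by
    have h := p.2
    simp only [Sph3, Set.mem_ofPred_eq, Prod.smul_fst, Prod.smul_snd, smul_eq_mul, norm_mul,
      norm_exp_I_mul_ofReal, one_mul] at h ⊢
    exact h⟩

@[simp]
lemma rot_zero (p : ↥Sph3) : rot 0 p = p := by
  simp [rot]

lemma rot_rot (φ ψ : ℝ) (p : ↥Sph3) : rot φ (rot ψ p) = rot (φ + ψ) p := by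
  ext1
  simp only [rot, smul_smul, ← exp_add, ofReal_add, mul_add]

lemma act_rot (n : ℕ) (g : ZMod 7) (θ : ℝ) (p : ↥Sph3) :
    act n g (rot θ p) = rot θ (act n g p) := by
  ext1
  simp only [act, rot, Prod.smul_mk, Prod.smul_fst, Prod.smul_snd, smul_eq_mul]
  ext <;> ring

lemma norm_le_one_of_mem_sph3 (p : ↥Sph3) : ‖p.1‖ ≤ 1 := by
  have h := p.2
  simp only [Sph3, Set.mem_ofPred_eq] at h
  rw [Prod.norm_def]
  apply max_le <;> nlinarith [norm_nonneg p.1.1, norm_nonneg p.1.2]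

lemma dist_rot_le (θ : ℝ) (p : ↥Sph3) : dist (rot θ p) p ≤ |θ| := by
  rw [Subtype.dist_eq, dist_eq_norm]
  calc ‖exp (I * θ) • p.1 - p.1‖ = ‖exp (I * θ) - 1‖ * ‖p.1‖ := by
        rw [← norm_smul, sub_smul, one_smul]
    _ ≤ |θ| * 1 := by
        gcongr
        · exact Real.norm_exp_I_mul_ofReal_sub_one_le
        · exact norm_le_one_of_mem_sph3 p
    _ = |θ| := mul_one _

lemma continuous_rot : Continuous fun q : ℝ × ↥Sph3 => rot q.1 q.2 := by
  unfold rot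
  fun_prop

lemma continuous_act (n : ℕ) (g : ZMod 7) : Continuous (act n g) := by
  unfold act
  fun_prop

lemma exp_I_mul_pow_ne_one {N : ℕ} {θ : ℝ} (h0 : θ ≠ 0) (hθ : |θ| < 2 * Real.pi / N) :
    exp (I * θ) ^ N ≠ 1 := by
  have hN : (0 : ℝ) < N := by
    by_contra! hN
    rw [le_antisymm hN N.cast_nonneg, div_zero] at hθ
    exact (abs_nonneg θ).not_gt hθ
  rw [← exp_nat_mul, Ne, Complex.exp_eq_one_iff]
  rintro ⟨m, hm⟩
  have hNθ : (N : ℝ) * θ = m * (2 * Real.pi) := by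
    simpa using congrArg Complex.im hm
  have hm_lt : |(m : ℝ)| < 1 := by
    have h2π := Real.two_pi_pos
    rw [lt_div_iff₀ hN] at hθ
    have := congrArg abs hNθ
    rw [abs_mul, abs_mul, Nat.abs_cast, abs_of_pos h2π] at this
    nlinarith
  have hm0 : m = 0 := Int.abs_lt_one_iff.1 (by exact_mod_cast hm_lt)
  simp [hm0, hN.ne'] at hNθ
  exact h0 hNθ

lemma sph3_ne_zero (p : ↥Sph3) : p.1.1 ≠ 0 ∨ p.1.2 ≠ 0 := by
  by_contra! h
  have hp := p.2
  simp [Sph3, h.1, h.2] at hp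

lemma rot_ne_act {θ : ℝ} (h0 : θ ≠ 0) (hθ : |θ| < 2 * Real.pi / 7) (n : ℕ) (g : ZMod 7)
    (p : ↥Sph3) : rot θ p ≠ act n g p := by
  have hroot : ∀ m : ℕ, exp (I * θ) ≠ zeta m := fun m hm =>
    exp_I_mul_pow_ne_one h0 (by exact_mod_cast hθ) (by rw [hm, zeta_natCast_pow_seven])
  intro h
  have h1 : exp (I * θ) * p.1.1 = zeta g.val * p.1.1 := congrArg (fun q : ↥Sph3 => q.1.1) h
  have h2 : exp (I * θ) * p.1.2 = zeta (n * g.val : ℕ) * p.1.2 := by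
    rw [Nat.cast_mul]
    exact congrArg (fun q : ↥Sph3 => q.1.2) h
  rcases sph3_ne_zero p with hp | hp
  · exact hroot _ (mul_right_cancel₀ hp h1)
  · exact hroot _ (mul_right_cancel₀ hp h2)

lemma rot_ne_act_rot {φ ψ : ℝ} (hne : φ ≠ ψ) (hlt : |φ - ψ| < 2 * Real.pi / 7) (n : ℕ)
    (g : ZMod 7) (p : ↥Sph3) : rot φ p ≠ act n g (rot ψ p) := by
  intro h
  apply rot_ne_act (sub_ne_zero.2 hne) hlt n g p
  rw [sub_eq_neg_add]
  simpa [rot_rot, act_rot] using congrArg (rot (-ψ)) h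

noncomputable def orbitDist (n : ℕ) (x y : ↥Sph3) : ℝ :=
  Finset.univ.inf' Finset.univ_nonempty fun g : ZMod 7 => dist x (act n g y)

lemma orbitDist_le (n : ℕ) (x y : ↥Sph3) (g : ZMod 7) : orbitDist n x y ≤ dist x (act n g y) :=
  Finset.inf'_le _ (Finset.mem_univ g)

lemma orbitDist_pos {n : ℕ} {x y : ↥Sph3} (h : ∀ g, x ≠ act n g y) : 0 < orbitDist n x y :=
  (Finset.lt_inf'_iff _).2 fun g _ => dist_pos.2 (h g)

lemma Continuous.orbitDist {X : Type*} [TopologicalSpace X] (n : ℕ) {f g : X → ↥Sph3}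
    (hf : Continuous f) (hg : Continuous g) : Continuous fun x => orbitDist n (f x) (g x) :=
  Continuous.finset_inf'_apply _ fun a _ => hf.dist ((continuous_act n a).comp hg)

lemma rot_ne_act_of_abs_lt_orbitDist {n : ℕ} {x y : ↥Sph3} {θ : ℝ} (h : |θ| < orbitDist n y x)
    (g : ZMod 7) : rot θ y ≠ act n g x := by
  intro hy
  have : dist y (act n g x) ≤ |θ| := by
    rw [← hy, dist_comm]
    exact dist_rot_le θ y
  linarith [orbitDist_le n y x g]

lemma ne_act_rot_of_abs_lt_orbitDist {n : ℕ} {x y : ↥Sph3} {θ : ℝ} (h : |θ| < orbitDist n x y)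
    (g : ZMod 7) : x ≠ act n g (rot θ y) := by
  intro hx
  rw [act_rot] at hx
  have : dist x (act n g y) ≤ |θ| := by
    rw [hx]
    exact dist_rot_le θ _
  linarith [orbitDist_le n x y g]

noncomputable def spreadAngle (r : ℝ) {k : ℕ} (i : Fin k) : ℝ := r * ((i : ℝ) - 1) / k

lemma spreadAngle_nonneg {r : ℝ} (hr : 0 ≤ r) {k : ℕ} {i : Fin k} (hi : (i : ℕ) ≠ 0) :
    0 ≤ spreadAngle r i := by
  have : (1 : ℝ) ≤ i := by exact_mod_cast Nat.one_le_iff_ne_zero.2 hi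
  unfold spreadAngle
  have := sub_nonneg.2 this
  positivity

lemma spreadAngle_lt {r : ℝ} (hr : 0 < r) {k : ℕ} (i : Fin k) : spreadAngle r i < r := by
  have hk : (0 : ℝ) < k := by exact_mod_cast i.pos
  have hi : (i : ℝ) < k := by exact_mod_cast i.isLt
  rw [spreadAngle, div_lt_iff₀ hk]
  nlinarith

lemma spreadAngle_injective {r : ℝ} (hr : r ≠ 0) (k : ℕ) :
    Function.Injective (spreadAngle r (k := k)) := by
  intro i j h
  have hk : (k : ℝ) ≠ 0 := by exact_mod_cast i.pos.ne'
  simp only [spreadAngle, div_left_inj' hk, mul_right_inj' hr, sub_left_inj] at h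
  exact Fin.ext (by exact_mod_cast h)

noncomputable def spreadRadius (n : ℕ) (y : OrbConf n 2) : ℝ :=
  min (1 / 2) (min (orbitDist n (y.1 0) (y.1 1)) (orbitDist n (y.1 1) (y.1 0)))

lemma spreadRadius_pos (n : ℕ) (y : OrbConf n 2) : 0 < spreadRadius n y :=
  lt_min one_half_pos
    (lt_min (orbitDist_pos (y.2 0 1 (by decide))) (orbitDist_pos (y.2 1 0 (by decide))))

lemma continuous_eval_orbConf (n : ℕ) {k : ℕ} (i : Fin k) :
    Continuous fun y : OrbConf n k => y.1 i :=
  (continuous_apply i).comp continuous_subtype_val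

lemma continuous_spreadRadius (n : ℕ) : Continuous (spreadRadius n) := by
  have hd : ∀ i j : Fin 2, Continuous fun y : OrbConf n 2 => orbitDist n (y.1 i) (y.1 j) :=
    fun i j => (continuous_eval_orbConf n i).orbitDist n (continuous_eval_orbConf n j)
  unfold spreadRadius
  exact continuous_const.min ((hd 0 1).min (hd 1 0))

noncomputable def spread (n k : ℕ) (y : OrbConf n 2) (i : Fin k) : ↥Sph3 :=
  if (i : ℕ) = 0 then y.1 0 else rot (spreadAngle (spreadRadius n y) i) (y.1 1)

lemma continuous_spread (n k : ℕ) : Continuous (spread n k) := by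
  refine continuous_pi fun i => ?_
  unfold spread
  split_ifs
  · exact continuous_eval_orbConf n 0
  · exact continuous_rot.comp
      (((continuous_spreadRadius n).mul continuous_const).div_const _ |>.prodMk
        (continuous_eval_orbConf n 1))

lemma spread_mem_orbConf (n k : ℕ) (y : OrbConf n 2) :
    ∀ i j, i ≠ j → ∀ g : ZMod 7, spread n k y i ≠ act n g (spread n k y j) := by
  intro i j hij g
  set r := spreadRadius n y
  have hr : 0 < r := spreadRadius_pos n y
  have hr₀ : r < 2 * Real.pi / 7 := by
    have : r ≤ 1 / 2 := min_le_left _ _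
    linarith [Real.pi_gt_three]
  have hr₁₂ : r ≤ orbitDist n (y.1 0) (y.1 1) := (min_le_right _ _).trans (min_le_left _ _)
  have hr₂₁ : r ≤ orbitDist n (y.1 1) (y.1 0) := (min_le_right _ _).trans (min_le_right _ _)
  have hθ : ∀ {i : Fin k}, (i : ℕ) ≠ 0 → 0 ≤ spreadAngle r i ∧ spreadAngle r i < r :=
    fun hi => ⟨spreadAngle_nonneg hr.le hi, spreadAngle_lt hr _⟩
  unfold spread
  split_ifs with hi hj hj
  · exact absurd (Fin.ext (hi.trans hj.symm)) hij
  · refine ne_act_rot_of_abs_lt_orbitDist ?_ g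
    rw [abs_of_nonneg (hθ hj).1]
    linarith [(hθ hj).2]
  · refine rot_ne_act_of_abs_lt_orbitDist ?_ g
    rw [abs_of_nonneg (hθ hi).1]
    linarith [(hθ hi).2]
  · refine rot_ne_act_rot ((spreadAngle_injective hr.ne' k).ne hij) ?_ n g _
    rw [abs_sub_lt_iff]
    constructor <;> linarith [hθ hi, hθ hj]

theorem stmt_17_general (n : ℕ) (k : ℕ) (hk : 2 ≤ k) :
    ∃ s : C(OrbConf n 2, OrbConf n k),
      ∀ (y : OrbConf n 2) (i : Fin 2), (s y).1 (Fin.castLE hk i) = y.1 i := by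
  refine ⟨⟨fun y => ⟨spread n k y, spread_mem_orbConf n k y⟩,
    (continuous_spread n k).subtype_mk _⟩, fun y i => ?_⟩
  fin_cases i <;> simp [spread, spreadAngle]

/-- For `n ∈ {1,2}` and every `k ≥ 2`, the forgetful map
`F̃_k(L_{7,n}) → F̃₂(L_{7,n})`, `(x₁,…,x_k) ↦ (x₁,x₂)`, admits a continuous section. -/
theorem stmt_17 (n : ℕ) (hn : n = 1 ∨ n = 2) (k : ℕ) (hk : 2 ≤ k) :
    ∃ s : C(OrbConf n 2, OrbConf n k),
      ∀ (y : OrbConf n 2) (i : Fin 2), (s y).1 (Fin.castLE hk i) = y.1 i :=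
  stmt_17_general n k hk
end
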